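/- Let (G, T) be a facet inducing Steiner graph with facet weights c and v ∈ V(G)\T a degree-three vertex with incident edges e₁ = vv₁, e₂ = vv₂, e₃ = vv₃. If c(e_i) < c(e_j) + c(e_k) for {i,j,k} = {1,2,3}, then no root of c contains both e_j and e_k, and v_j v_k is not an edge of G. -/
import Mathlib


open Classical

/-- Two sets intersect if `A ∩ B`, `A \ B`, `B \ A` are all nonempty. -/
def Intersecting {V : Type*} (A B : Set V) : Prop :=
  (A ∩ B).Nonempty ∧ (A \ B).Nonempty ∧ (B \ A).Nonempty

/-- The edge `e` belongs to the cut `δ(S)`. -/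
def InCut {V : Type*} (S : Set V) (e : Sym2 V) : Prop :=
  ∃ u v : V, e = s(u, v) ∧ u ∈ S ∧ v ∉ S

/-- `δ(S)` is a `T`-Steiner cut iff `T ∩ S ≠ ∅` and `T \ S ≠ ∅`. -/
def IsSteinerCut {V : Type*} (T S : Set V) : Prop :=
  (T ∩ S).Nonempty ∧ (T \ S).Nonempty

/-- The incidence vector of `δ(S)` in `ℝ^{E(G)}`. -/
noncomputable def chi {V : Type*} (G : SimpleGraph V) (S : Set V) : ↥G.edgeSet → ℝ :=
  fun e => if InCut S e.val then 1 else 0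

/-- The `c`-weight of the cut `δ(S)` in `G`. -/
noncomputable def cutWeight {V : Type*} [Fintype V] [DecidableEq V] (G : SimpleGraph V)
    (c : Sym2 V → ℤ) (S : Set V) : ℤ :=
  ∑ e ∈ G.edgeFinset, if InCut S e then c e else 0

/-- `δ(S)` is a root of `c`: a minimum `c`-weight `T`-Steiner cut in `G`. -/
def IsRoot {V : Type*} [Fintype V] [DecidableEq V] (G : SimpleGraph V) (T : Set V)
    (c : Sym2 V → ℤ) (S : Set V) : Prop :=
  IsSteinerCut T S ∧ ∀ S' : Set V, IsSteinerCut T S' → cutWeight G c S ≤ cutWeight G c S'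

/-- `c` are facet weights for `(G, T)`: strictly positive on edges, in minimum integer
form, and the incidence vectors of the roots span `ℝ^{E(G)}`. -/
def FacetWeights {V : Type*} [Fintype V] [DecidableEq V] (G : SimpleGraph V) (T : Set V)
    (c : Sym2 V → ℤ) : Prop :=
  (∀ e ∈ G.edgeSet, 0 < c e) ∧
  (∀ d : ℤ, (∀ e ∈ G.edgeSet, d ∣ c e) → IsUnit d) ∧
  Submodule.span ℝ (chi G '' {S : Set V | IsRoot G T c S}) = ⊤

lemma inCut_iff {V : Type*} (S : Set V) (u w : V) :
    InCut S s(u, w) ↔ (u ∈ S ∧ w ∉ S) ∨ (w ∈ S ∧ u ∉ S) := by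
  constructor
  · rintro ⟨a, b, hab, ha, hb⟩
    rw [Sym2.eq_iff] at hab
    rcases hab with ⟨rfl, rfl⟩ | ⟨rfl, rfl⟩ <;> tauto
  · rintro (⟨h1, h2⟩ | ⟨h1, h2⟩)
    · exact ⟨u, w, rfl, h1, h2⟩
    · exact ⟨w, u, Sym2.eq_swap.symm, h1, h2⟩

lemma inCut_compl {V : Type*} (S : Set V) (e : Sym2 V) :
    InCut Sᶜ e ↔ InCut S e := by
  induction e using Sym2.ind with
  | _ a b => simp [inCut_iff]; tauto

lemma cutWeight_compl {V : Type*} [Fintype V] [DecidableEq V] (G : SimpleGraph V)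
    (c : Sym2 V → ℤ) (S : Set V) : cutWeight G c Sᶜ = cutWeight G c S :=
  Finset.sum_congr rfl fun e _ => by rw [inCut_compl]

lemma isRoot_compl {V : Type*} [Fintype V] [DecidableEq V] (G : SimpleGraph V) (T : Set V)
    (c : Sym2 V → ℤ) (S : Set V) (h : IsRoot G T c S) : IsRoot G T c Sᶜ := by
  obtain ⟨⟨⟨t, ht⟩, ⟨t', ht'⟩⟩, hmin⟩ := h
  refine ⟨⟨⟨t', ht'.1, ht'.2⟩, ⟨t, ht.1, fun h => h ht.2⟩⟩, fun S' hS' => ?_⟩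
  rw [cutWeight_compl]; exact hmin S' hS'

lemma root_move {V : Type*} [Fintype V] [DecidableEq V]
    (G : SimpleGraph V) (T : Set V) (c : Sym2 V → ℤ)
    (hpos : ∀ e ∈ G.edgeSet, 0 < c e)
    (v : V) (hv : v ∉ T) (v₁ v₂ v₃ : V)
    (h12 : v₁ ≠ v₂) (h13 : v₁ ≠ v₃) (h23 : v₂ ≠ v₃)
    (hnbr : G.neighborSet v = {v₁, v₂, v₃})
    (hlt : c s(v, v₁) < c s(v, v₂) + c s(v, v₃))
    (S : Set V) (hroot : IsRoot G T c S) (hvS : v ∈ S)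
    (h2 : InCut S s(v, v₂)) (h3 : InCut S s(v, v₃)) : False := by
  have hadj1 : G.Adj v v₁ := by
    have : v₁ ∈ G.neighborSet v := by rw [hnbr]; simp
    exact this
  have hadj2 : G.Adj v v₂ := by
    have : v₂ ∈ G.neighborSet v := by rw [hnbr]; simp
    exact this
  have hadj3 : G.Adj v v₃ := by
    have : v₃ ∈ G.neighborSet v := by rw [hnbr]; simp
    exact this
  have hne1 : v ≠ v₁ := hadj1.ne
  have hne2 : v ≠ v₂ := hadj2.ne
  have hne3 : v ≠ v₃ := hadj3.ne
  -- v₂, v₃ not in S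
  have hv2 : v₂ ∉ S := by
    rcases (inCut_iff S v v₂).1 h2 with ⟨_, h⟩ | ⟨_, h⟩
    · exact h
    · exact absurd hvS h
  have hv3 : v₃ ∉ S := by
    rcases (inCut_iff S v v₃).1 h3 with ⟨_, h⟩ | ⟨_, h⟩
    · exact h
    · exact absurd hvS h
  set S' : Set V := S \ {v} with hS'
  have hsc : IsSteinerCut T S' := by
    obtain ⟨t, htT, htS⟩ := hroot.1.1
    obtain ⟨t', ht'⟩ := hroot.1.2
    refine ⟨⟨t, htT, htS, ?_⟩, ⟨t', ht'.1, fun h => ht'.2 h.1⟩⟩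
    simp only [Set.mem_singleton_iff]
    rintro rfl; exact hv htT
  have hle := hroot.2 S' hsc
  -- the difference function
  set D : Sym2 V → ℤ := fun e =>
    (if InCut S e then c e else 0) - (if InCut S' e then c e else 0) with hD
  have hsum : cutWeight G c S - cutWeight G c S' = ∑ e ∈ G.edgeFinset, D e := by
    rw [cutWeight, cutWeight, ← Finset.sum_sub_distrib]
  have htsub : ({s(v, v₁), s(v, v₂), s(v, v₃)} : Finset (Sym2 V)) ⊆ G.edgeFinset := by
    intro e he
    simp only [Finset.mem_insert, Finset.mem_singleton] at he
    rcases he with rfl | rfl | rfl <;> simp [SimpleGraph.mem_edgeFinset, hadj1, hadj2, hadj3]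
  have hzero : ∀ e ∈ G.edgeFinset, e ∉ ({s(v, v₁), s(v, v₂), s(v, v₃)} : Finset (Sym2 V)) → D e = 0 := by
    intro e he hnt
    induction e using Sym2.ind with
    | _ a b =>
      have hab : G.Adj a b := by rwa [SimpleGraph.mem_edgeFinset, SimpleGraph.mem_edgeSet] at he
      simp only [Finset.mem_insert, Finset.mem_singleton] at hnt
      push_neg at hnt
      have ha : a ≠ v := by
        rintro rfl
        have : b ∈ G.neighborSet a := hab
        rw [hnbr] at this
        rcases this with rfl | rfl | rfl
        · exact hnt.1 rfl
        · exact hnt.2.1 rfl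
        · exact hnt.2.2 rfl
      have hb : b ≠ v := by
        rintro rfl
        have : a ∈ G.neighborSet b := hab.symm
        rw [hnbr] at this
        rcases this with rfl | rfl | rfl
        · exact hnt.1 (Sym2.eq_swap)
        · exact hnt.2.1 (Sym2.eq_swap)
        · exact hnt.2.2 (Sym2.eq_swap)
      have : InCut S s(a, b) ↔ InCut S' s(a, b) := by
        simp [inCut_iff, hS', Set.mem_diff, ha, hb]
      simp [hD, this]
  have hsum2 : ∑ e ∈ G.edgeFinset, D e =
      ∑ e ∈ ({s(v, v₁), s(v, v₂), s(v, v₃)} : Finset (Sym2 V)), D e :=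
    (Finset.sum_subset htsub (fun e he hne => hzero e he hne)).symm
  -- edge distinctness
  have hd12 : s(v, v₁) ≠ s(v, v₂) := by simp [Sym2.eq_iff, h12, hne2]
  have hd13 : s(v, v₁) ≠ s(v, v₃) := by simp [Sym2.eq_iff, h13, hne3]
  have hd23 : s(v, v₂) ≠ s(v, v₃) := by simp [Sym2.eq_iff, h23, hne3]
  have hsum3 : ∑ e ∈ ({s(v, v₁), s(v, v₂), s(v, v₃)} : Finset (Sym2 V)), D e =
      D s(v, v₁) + D s(v, v₂) + D s(v, v₃) := by
    rw [Finset.sum_insert (by simp [hd12, hd13]), Finset.sum_insert (by simp [hd23]),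
      Finset.sum_singleton]
    ring
  have hD2 : D s(v, v₂) = c s(v, v₂) := by
    have hnc : ¬ InCut S' s(v, v₂) := by
      simp [inCut_iff, hS', Set.mem_diff, hv2]
    simp [hD, h2, hnc]
  have hD3 : D s(v, v₃) = c s(v, v₃) := by
    have hnc : ¬ InCut S' s(v, v₃) := by
      simp [inCut_iff, hS', Set.mem_diff, hv3]
    simp [hD, h3, hnc]
  have hpos1 : 0 < c s(v, v₁) := hpos _ (G.mem_edgeSet.2 hadj1)
  have hD1 : 0 < D s(v, v₁) + D s(v, v₂) + D s(v, v₃) := by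
    rw [hD2, hD3]
    by_cases hv1 : v₁ ∈ S
    · have hc1 : ¬ InCut S s(v, v₁) := by simp [inCut_iff, hvS, hv1]
      have hc1' : InCut S' s(v, v₁) := by
        rw [inCut_iff]
        right
        exact ⟨⟨hv1, by simp [hne1.symm]⟩, by simp [hS']⟩
      have : D s(v, v₁) = - c s(v, v₁) := by simp [hD, hc1, hc1']
      rw [this]; omega
    · have hc1 : InCut S s(v, v₁) := (inCut_iff _ _ _).2 (Or.inl ⟨hvS, hv1⟩)
      have hc1' : ¬ InCut S' s(v, v₁) := by
        simp [inCut_iff, hS', Set.mem_diff, hv1]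
      have : D s(v, v₁) = c s(v, v₁) := by simp [hD, hc1, hc1']
      rw [this]
      have := hpos _ (G.mem_edgeSet.2 hadj2)
      have := hpos _ (G.mem_edgeSet.2 hadj3)
      omega
  have : cutWeight G c S' < cutWeight G c S := by omega
  omega

/-- In a facet inducing Steiner graph `(G, T)` with facet weights `c` and a
non-terminal degree-three vertex `v` with neighbors `v₁, v₂, v₃`: if
`c(vv₁) < c(vv₂) + c(vv₃)`, then no root of `c` contains both `vv₂` and `vv₃`, and
`v₂v₃` is not an edge of `G`. -/
theorem degree_three_nonterminal_strict {V : Type*} [Fintype V] [DecidableEq V]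
    (G : SimpleGraph V) (hconn : G.Connected) (T : Set V) (hT : 2 ≤ T.ncard)
    (c : Sym2 V → ℤ) (hfw : FacetWeights G T c)
    (v : V) (hv : v ∉ T) (v₁ v₂ v₃ : V)
    (h12 : v₁ ≠ v₂) (h13 : v₁ ≠ v₃) (h23 : v₂ ≠ v₃)
    (hnbr : G.neighborSet v = {v₁, v₂, v₃})
    (hlt : c s(v, v₁) < c s(v, v₂) + c s(v, v₃)) :
    (∀ S : Set V, IsRoot G T c S → ¬ (InCut S s(v, v₂) ∧ InCut S s(v, v₃))) ∧
    ¬ G.Adj v₂ v₃ := by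
  have parta : ∀ S : Set V, IsRoot G T c S →
      ¬ (InCut S s(v, v₂) ∧ InCut S s(v, v₃)) := by
    rintro S hS ⟨h2, h3⟩
    by_cases hvS : v ∈ S
    · exact root_move G T c hfw.1 v hv v₁ v₂ v₃ h12 h13 h23 hnbr hlt S hS hvS h2 h3
    · exact root_move G T c hfw.1 v hv v₁ v₂ v₃ h12 h13 h23 hnbr hlt Sᶜ
        (isRoot_compl G T c S hS) hvS ((inCut_compl S _).2 h2) ((inCut_compl S _).2 h3)
  refine ⟨parta, fun hadj => ?_⟩
  have hadj2 : G.Adj v v₂ := by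
    have : v₂ ∈ G.neighborSet v := by rw [hnbr]; simp
    exact this
  have hadj3 : G.Adj v v₃ := by
    have : v₃ ∈ G.neighborSet v := by rw [hnbr]; simp
    exact this
  have hne2 : v ≠ v₂ := hadj2.ne
  have hne3 : v ≠ v₃ := hadj3.ne
  have hf : s(v₂, v₃) ∈ G.edgeSet := hadj
  have he2 : s(v, v₂) ∈ G.edgeSet := hadj2
  have he3 : s(v, v₃) ∈ G.edgeSet := hadj3
  set f : ↥G.edgeSet := ⟨s(v₂, v₃), hf⟩ with hfdef
  set i2 : ↥G.edgeSet := ⟨s(v, v₂), he2⟩ with hi2def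
  set i3 : ↥G.edgeSet := ⟨s(v, v₃), he3⟩ with hi3def
  set φ : (↥G.edgeSet → ℝ) →ₗ[ℝ] ℝ :=
    (LinearMap.proj f : (↥G.edgeSet → ℝ) →ₗ[ℝ] ℝ) -
    (LinearMap.proj i2 : (↥G.edgeSet → ℝ) →ₗ[ℝ] ℝ) -
    (LinearMap.proj i3 : (↥G.edgeSet → ℝ) →ₗ[ℝ] ℝ) with hφdef
  have hgen : chi G '' {S : Set V | IsRoot G T c S} ⊆ (LinearMap.ker φ : Set _) := by
    rintro x ⟨S, hS, rfl⟩
    have hn := parta S hS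
    simp only [SetLike.mem_coe, LinearMap.mem_ker, hφdef, LinearMap.sub_apply,
      LinearMap.proj_apply, chi, hfdef, hi2def, hi3def]
    by_cases hvv : v ∈ S <;> by_cases hv2 : v₂ ∈ S <;> by_cases hv3 : v₃ ∈ S <;>
      simp_all [inCut_iff]
  have hle : (⊤ : Submodule ℝ (↥G.edgeSet → ℝ)) ≤ LinearMap.ker φ := by
    rw [← hfw.2.2]; exact Submodule.span_le.2 hgen
  have hφ0 : φ (Pi.single f 1) = 0 := hle Submodule.mem_top
  have hne_f2 : i2 ≠ f := by
    rw [hi2def, hfdef, Ne, Subtype.mk_eq_mk, Sym2.eq_iff]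
    rintro (⟨h, h'⟩ | ⟨h, h'⟩)
    · exact hne2 h
    · exact hne3 h
  have hne_f3 : i3 ≠ f := by
    rw [hi3def, hfdef, Ne, Subtype.mk_eq_mk, Sym2.eq_iff]
    rintro (⟨h, h'⟩ | ⟨h, h'⟩)
    · exact hne2 h
    · exact hne3 h
  rw [hφdef] at hφ0
  simp only [LinearMap.sub_apply, LinearMap.proj_apply, Pi.single_eq_same,
    Pi.single_eq_of_ne hne_f2, Pi.single_eq_of_ne hne_f3] at hφ0
  norm_num at hφ0
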